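/- arXiv:2004.09468 — 5 statements merged into one kernel-verified Lean document; each statement's English description precedes it below -/
import Mathlib

section
/- Let C_1, …, C_r together with optimal mixed strategies p_1, …, p_r be a Nash clustering of a finite symmetric zero-sum game (Π, f). Then for all indices i < j ≤ r, the relative population performance satisfies RPP(C_i, C_j) ≥ 0; in particular, the mixed strategy p_i (which is supported on C_i) satisfies f(p_i, q) ≥ 0 for every mixed strategy q on C_j. -/
/-- A mixed strategy supported on the subset `A`. -/
def IsMixedOn {G : Type*} [Fintype G] (A : Set G) (p : G → ℝ) : Prop :=
  (∀ x, 0 ≤ p x) ∧ (∀ x, x ∉ A → p x = 0) ∧ ∑ x, p x = 1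

/-- Payoff of mixed strategy `p` against mixed strategy `q`. -/
noncomputable def payMM {G : Type*} [Fintype G] (f : G → G → ℝ) (p q : G → ℝ) : ℝ :=
  ∑ x, ∑ y, p x * q y * f x y

/-- Payoff of mixed strategy `p` against pure strategy `y`. -/
noncomputable def payMP {G : Type*} [Fintype G] (f : G → G → ℝ) (p : G → ℝ) (y : G) : ℝ :=
  ∑ x, p x * f x y

/-- `p` is an optimal (symmetric Nash) mixed strategy for the game restricted to `A`. -/
def IsOptimalOn {G : Type*} [Fintype G] (f : G → G → ℝ) (A : Set G) (p : G → ℝ) : Prop :=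
  IsMixedOn A p ∧ ∀ y ∈ A, 0 ≤ payMP f p y

/-- Support of a mixed strategy. -/
def supp {G : Type*} (p : G → ℝ) : Set G := {x | 0 < p x}

/-- Relative population performance of `A` against `B`. -/
noncomputable def RPP {G : Type*} [Fintype G] (f : G → G → ℝ) (A B : Set G) : ℝ :=
  sSup ((fun p => sInf ((fun q => payMM f p q) '' {q | IsMixedOn B q})) '' {p | IsMixedOn A p})

/-!
The remainders `Π \ (C₀ ∪ ⋯ ∪ C_{k-1})` shrink as `k` grows, and `C j = supp pⱼ` lies in the
`j`-th one, hence in the `i`-th one, on which `pᵢ` is optimal. So `pᵢ` earns a nonnegative payoff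
against every pure, hence every mixed, strategy on `C j`, and `RPP(C i, C j)` is at least the
payoff `pᵢ` guarantees there.
-/

lemma antitone_univ_diff_iUnion_lt {α ι : Type*} [Preorder ι] (C : ι → Set α) :
    Antitone fun i => Set.univ \ ⋃ j, ⋃ (_ : j < i), C j :=
  fun _ _ hik => Set.sdiff_subset_sdiff_right <| Set.iUnion_mono fun _ =>
    Set.iUnion_subset fun hj => Set.subset_iUnion_of_subset (hj.trans_le hik) le_rfl

section

variable {G : Type*} [Fintype G]

namespace IsMixedOn

variable {A B : Set G} {p : G → ℝ}

lemma le_one (hp : IsMixedOn A p) (x : G) : p x ≤ 1 :=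
  hp.2.2 ▸ Finset.single_le_sum (fun y _ => hp.1 y) (Finset.mem_univ x)

lemma mono (hp : IsMixedOn A p) (hAB : A ⊆ B) : IsMixedOn B p :=
  ⟨hp.1, fun x hx => hp.2.1 x (fun hxA => hx (hAB hxA)), hp.2.2⟩

lemma supp_subset (hp : IsMixedOn A p) : supp p ⊆ A := fun x hx => by
  by_contra hxA
  exact (hx : 0 < p x).ne' (hp.2.1 x hxA)

lemma on_supp (hp : IsMixedOn A p) : IsMixedOn (supp p) p :=
  ⟨hp.1, fun x hx => le_antisymm (not_lt.mp hx) (hp.1 x), hp.2.2⟩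

end IsMixedOn

lemma payMM_eq_sum_mul_payMP (f : G → G → ℝ) (p q : G → ℝ) :
    payMM f p q = ∑ y, q y * payMP f p y := by
  simp only [payMM, payMP, Finset.mul_sum]
  rw [Finset.sum_comm]
  exact Finset.sum_congr rfl fun y _ => Finset.sum_congr rfl fun x _ => by ring

lemma payMM_nonneg {f : G → G → ℝ} {B : Set G} {p q : G → ℝ} (hq : IsMixedOn B q)
    (hp : ∀ y ∈ B, 0 ≤ payMP f p y) : 0 ≤ payMM f p q := by
  rw [payMM_eq_sum_mul_payMP]
  refine Finset.sum_nonneg fun y _ => ?_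
  by_cases hy : y ∈ B
  · exact mul_nonneg (hq.1 y) (hp y hy)
  · simp [hq.2.1 y hy]

lemma abs_payMM_le (f : G → G → ℝ) {A B : Set G} {p q : G → ℝ}
    (hp : IsMixedOn A p) (hq : IsMixedOn B q) :
    |payMM f p q| ≤ ∑ x, ∑ y, |f x y| := by
  have hpq (x y : G) : |p x * q y| ≤ 1 := by
    rw [abs_of_nonneg (mul_nonneg (hp.1 x) (hq.1 y))]
    exact mul_le_one₀ (hp.le_one x) (hq.1 y) (hq.le_one y)
  calc |payMM f p q| ≤ ∑ x, ∑ y, |p x * q y * f x y| :=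
        (Finset.abs_sum_le_sum_abs _ _).trans
          (Finset.sum_le_sum fun x _ => Finset.abs_sum_le_sum_abs _ _)
    _ ≤ ∑ x, ∑ y, |f x y| := by
        refine Finset.sum_le_sum fun x _ => Finset.sum_le_sum fun y _ => ?_
        rw [abs_mul]
        exact mul_le_of_le_one_left (abs_nonneg _) (hpq x y)

/-- `RPP f A B` is the supremum of `securityLevel f B` over the mixed strategies on `A`. -/
noncomputable def securityLevel (f : G → G → ℝ) (B : Set G) (p : G → ℝ) : ℝ :=
  sInf ((fun q => payMM f p q) '' {q | IsMixedOn B q})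

section securityLevel

variable {f : G → G → ℝ} {A B : Set G} {p q₀ : G → ℝ}

lemma le_securityLevel {c : ℝ} (hq₀ : IsMixedOn B q₀)
    (h : ∀ q, IsMixedOn B q → c ≤ payMM f p q) : c ≤ securityLevel f B p :=
  le_csInf ⟨_, q₀, hq₀, rfl⟩ (by rintro _ ⟨q, hq, rfl⟩; exact h q hq)

lemma securityLevel_le_sum_abs (hp : IsMixedOn A p) (hq₀ : IsMixedOn B q₀) :
    securityLevel f B p ≤ ∑ x, ∑ y, |f x y| := by
  have hbdd : BddBelow ((fun q => payMM f p q) '' {q | IsMixedOn B q}) :=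
    ⟨-∑ x, ∑ y, |f x y|, by
      rintro _ ⟨q, hq, rfl⟩
      exact neg_le_of_abs_le (abs_payMM_le f hp hq)⟩
  exact (csInf_le hbdd ⟨q₀, hq₀, rfl⟩).trans (le_of_abs_le (abs_payMM_le f hp hq₀))

lemma le_RPP {c : ℝ} (hp : IsMixedOn A p) (hq₀ : IsMixedOn B q₀)
    (h : ∀ q, IsMixedOn B q → c ≤ payMM f p q) : c ≤ RPP f A B := by
  have hbdd : BddAbove (securityLevel f B '' {p | IsMixedOn A p}) :=
    ⟨_, by rintro _ ⟨p', hp', rfl⟩; exact securityLevel_le_sum_abs hp' hq₀⟩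
  exact le_csSup_of_le hbdd ⟨p, hp, rfl⟩ (le_securityLevel hq₀ h)

end securityLevel

end

theorem nash_clustering_rpp_nonneg_general
    {G : Type*} [Fintype G]
    (f : G → G → ℝ)
    (r : ℕ) (C : Fin r → Set G) (p : Fin r → G → ℝ)
    (hopt : ∀ i : Fin r, IsOptimalOn f (Set.univ \ ⋃ j, ⋃ (_ : j < i), C j) (p i))
    (hsupp : ∀ i, C i = supp (p i)) :
    ∀ i j : Fin r, i < j →
      0 ≤ RPP f (C i) (C j) ∧
      ∀ q : G → ℝ, IsMixedOn (C j) q → 0 ≤ payMM f (p i) q := by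
  intro i j hij
  have hmix (k : Fin r) : IsMixedOn (C k) (p k) := hsupp k ▸ (hopt k).1.on_supp
  have hCj : C j ⊆ Set.univ \ ⋃ k, ⋃ (_ : k < i), C k :=
    hsupp j ▸ (hopt j).1.supp_subset.trans (antitone_univ_diff_iUnion_lt C hij.le)
  have hpay (q : G → ℝ) (hq : IsMixedOn (C j) q) : 0 ≤ payMM f (p i) q :=
    payMM_nonneg (hq.mono hCj) (hopt i).2
  exact ⟨le_RPP (hmix i) (hmix j) hpay, hpay⟩

/-- In a Nash clustering of a finite symmetric zero-sum game, for all
indices i < j, RPP(C_i, C_j) ≥ 0; in particular p_i gets nonnegative payoff against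
every mixed strategy on C_j. -/
theorem nash_clustering_rpp_nonneg
    {G : Type*} [Fintype G] [Nonempty G]
    (f : G → G → ℝ) (hf : ∀ x y, f x y = - f y x)
    (r : ℕ) (C : Fin r → Set G) (p : Fin r → G → ℝ)
    (hne : ∀ i, (C i).Nonempty)
    (hdisj : ∀ i j, i ≠ j → Disjoint (C i) (C j))
    (hcover : ⋃ i, C i = Set.univ)
    (hopt : ∀ i : Fin r, IsOptimalOn f (Set.univ \ ⋃ j, ⋃ (_ : j < i), C j) (p i))
    (hsupp : ∀ i, C i = supp (p i)) :
    ∀ i j : Fin r, i < j →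
      0 ≤ RPP f (C i) (C j) ∧
      ∀ q : G → ℝ, IsMixedOn (C j) q → 0 ≤ payMM f (p i) q :=
  nash_clustering_rpp_nonneg_general f r C p hopt hsupp
end

section
/- Let C_1, …, C_r together with optimal mixed strategies p_1, …, p_r be a Nash clustering of a finite symmetric zero-sum game (Π, f). Suppose a population P ⊆ Π contains the entire cluster C_i (C_i ⊆ P), and suppose π ∈ Π beats every member of P, i.e. f(π, σ) > 0 for all σ ∈ P. Then π belongs to a strictly earlier cluster: there exists k < i with π ∈ C_k. -/
section

variable {G : Type*} [Fintype G] {f : G → G → ℝ} {A : Set G} {p : G → ℝ}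

theorem IsMixedOn.supp_nonempty (hp : IsMixedOn A p) : (supp p).Nonempty := by
  by_contra h
  have hzero : ∀ x, p x = 0 := fun x =>
    le_antisymm (not_lt.mp fun hx => h ⟨x, hx⟩) (hp.1 x)
  simpa [hzero] using hp.2.2

theorem IsMixedOn.payMP_neg (hp : IsMixedOn A p) {y : G} (hy : ∀ x ∈ supp p, f x y < 0) :
    payMP f p y < 0 := by
  obtain ⟨x₀, hx₀⟩ := hp.supp_nonempty
  refine Finset.sum_neg' (fun x _ => ?_)
    ⟨x₀, Finset.mem_univ _, mul_neg_of_pos_of_neg hx₀ (hy x₀ hx₀)⟩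
  rcases (hp.1 x).eq_or_lt with hx | hx
  · simp [← hx]
  · exact (mul_neg_of_pos_of_neg hx (hy x hx)).le

theorem IsOptimalOn.notMem_of_payMP_neg (hp : IsOptimalOn f A p) {y : G}
    (hy : payMP f p y < 0) : y ∉ A :=
  fun hyA => (hp.2 y hyA).not_gt hy

end

theorem beat_full_cluster_implies_earlier_cluster_general
    {G : Type*} [Fintype G]
    (f : G → G → ℝ) (hf : ∀ x y, f x y = - f y x)
    (r : ℕ) (C : Fin r → Set G) (p : Fin r → G → ℝ)
    (hopt : ∀ i : Fin r, IsOptimalOn f (Set.univ \ ⋃ j, ⋃ (_ : j < i), C j) (p i))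
    (hsupp : ∀ i, C i = supp (p i))
    (P : Set G) (i : Fin r) (hCP : C i ⊆ P)
    (π : G) (hbeat : ∀ σ ∈ P, 0 < f π σ) :
    ∃ k : Fin r, k < i ∧ π ∈ C k := by
  have hloses : payMP f (p i) π < 0 := (hopt i).1.payMP_neg fun x hx => by
    rw [hf]
    exact neg_neg_of_pos (hbeat x (hCP (hsupp i ▸ hx)))
  have hπ := (hopt i).notMem_of_payMP_neg hloses
  simpa using hπ

/-- If a population P contains an entire Nash cluster C_i and π beats
every member of P, then π belongs to a strictly earlier cluster. -/
theorem beat_full_cluster_implies_earlier_cluster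
    {G : Type*} [Fintype G] [Nonempty G]
    (f : G → G → ℝ) (hf : ∀ x y, f x y = - f y x)
    (r : ℕ) (C : Fin r → Set G) (p : Fin r → G → ℝ)
    (hne : ∀ i, (C i).Nonempty)
    (hdisj : ∀ i j, i ≠ j → Disjoint (C i) (C j))
    (hcover : ⋃ i, C i = Set.univ)
    (hopt : ∀ i : Fin r, IsOptimalOn f (Set.univ \ ⋃ j, ⋃ (_ : j < i), C j) (p i))
    (hsupp : ∀ i, C i = supp (p i))
    (P : Set G) (i : Fin r) (hCP : C i ⊆ P)
    (π : G) (hbeat : ∀ σ ∈ P, 0 < f π σ) :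
    ∃ k : Fin r, k < i ∧ π ∈ C k :=
  beat_full_cluster_implies_earlier_cluster_general f hf r C p hopt hsupp P i hCP π hbeat
end

section
/- In a k-layered finite symmetric zero-sum game with layers L_1, …, L_k (lower index meaning stronger), the support of any optimal mixed strategy p for the full game on Π is contained in the first layer: supp(p) ⊆ L_1. -/
/-!
If a nonempty set `S` of strategies beats its complement, an optimal `p` must put weight on `S`,
or any `z ∈ S` would win against `p`. Then `∑_{y ∈ S} p y · f(p, y) ≥ 0`; by antisymmetry the
`S × S` part of this sum cancels, leaving `∑_{y ∈ S} ∑_{x ∉ S} p y p x f(x, y)`, whose terms are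
all `≤ 0` and one of which is `< 0` as soon as `p` also weighs some `x ∉ S`.
The first layer of a layered game is such a set.
-/

lemma Finset.sum_mul_neg_of_exists_pos {ι : Type*} {t : Finset ι} {a b : ι → ℝ}
    (ha : ∀ i ∈ t, 0 ≤ a i) (hb : ∀ i ∈ t, 0 < a i → b i < 0) (h : ∃ i ∈ t, 0 < a i) :
    ∑ i ∈ t, a i * b i < 0 := by
  obtain ⟨i, hi, hai⟩ := h
  calc ∑ i ∈ t, a i * b i < ∑ _i ∈ t, (0 : ℝ) := by
        refine Finset.sum_lt_sum (fun j hj => ?_) ⟨i, hi, mul_neg_of_pos_of_neg hai (hb i hi hai)⟩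
        rcases (ha j hj).eq_or_lt with hj0 | hj0
        · simp [← hj0]
        · exact (mul_neg_of_pos_of_neg hj0 (hb j hj hj0)).le
    _ = 0 := Finset.sum_const_zero

section

variable {G : Type*} {f : G → G → ℝ}

lemma sum_mul_sum_eq_zero_of_antisymm (hf : ∀ x y, f x y = - f y x) (p : G → ℝ) (s : Finset G) :
    ∑ y ∈ s, p y * ∑ x ∈ s, p x * f x y = 0 := by
  have h : ∑ y ∈ s, p y * ∑ x ∈ s, p x * f x y = - ∑ y ∈ s, p y * ∑ x ∈ s, p x * f x y := by
    simp_rw [Finset.mul_sum, ← Finset.sum_neg_distrib]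
    rw [Finset.sum_comm]
    refine Finset.sum_congr rfl fun y _ => Finset.sum_congr rfl fun x _ => ?_
    rw [hf]
    ring
  linarith

variable [Fintype G]

lemma sum_mul_payMP_eq_sum_compl [DecidableEq G] (hf : ∀ x y, f x y = - f y x) (p : G → ℝ)
    (s : Finset G) :
    ∑ y ∈ s, p y * payMP f p y = ∑ y ∈ s, p y * ∑ x ∈ sᶜ, p x * f x y := by
  simp_rw [payMP, ← Finset.sum_add_sum_compl s, mul_add, Finset.sum_add_distrib,
    sum_mul_sum_eq_zero_of_antisymm hf, zero_add]

theorem supp_subset_of_forall_beats (hf : ∀ x y, f x y = - f y x) {p : G → ℝ}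
    (hp : IsOptimalOn f Set.univ p) {s : Finset G} (hs : s.Nonempty)
    (hbeats : ∀ x ∈ s, ∀ y ∉ s, 0 < f x y) :
    supp p ⊆ s := by
  classical
  obtain ⟨⟨hp0, -, hp1⟩, hpay⟩ := hp
  have hpay' (y : G) : 0 ≤ payMP f p y := hpay y (Set.mem_univ y)
  have hbeaten {x y : G} (hx : x ∉ s) (hy : y ∈ s) : f x y < 0 := by
    linarith [hf x y, hbeats y hy x hx]
  obtain ⟨y, hys, hy⟩ : ∃ y ∈ s, 0 < p y := by
    by_contra! hs0
    obtain ⟨z, hz⟩ := hs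
    have hplayed : ∃ x ∈ Finset.univ, 0 < p x :=
      Finset.exists_lt_of_sum_lt (by simp [hp1])
    refine (hpay' z).not_gt (Finset.sum_mul_neg_of_exists_pos (fun x _ => hp0 x) ?_ hplayed)
    exact fun x _ hx => hbeaten (fun hxs => (hs0 x hxs).not_gt hx) hz
  intro x hx
  by_contra hxs
  have hneg : ∑ y ∈ s, p y * ∑ x ∈ sᶜ, p x * f x y < 0 :=
    Finset.sum_mul_neg_of_exists_pos (fun y _ => hp0 y)
      (fun y' hy' _ => Finset.sum_mul_neg_of_exists_pos (fun x _ => hp0 x)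
        (fun x' hx' _ => hbeaten (Finset.mem_compl.mp hx') hy')
        ⟨x, Finset.mem_compl.mpr hxs, hx⟩)
      ⟨y, hys, hy⟩
  rw [← sum_mul_payMP_eq_sum_compl hf] at hneg
  exact hneg.not_ge (Finset.sum_nonneg fun y _ => mul_nonneg (hp0 y) (hpay' y))

end

theorem optimal_support_in_first_layer_general
    {G : Type*} [Fintype G]
    (f : G → G → ℝ) (hf : ∀ x y, f x y = - f y x)
    (k : ℕ) (hk : 0 < k) (L : Fin k → Set G)
    (hne : ∀ i, (L i).Nonempty)
    (hcover : ⋃ i, L i = Set.univ)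
    (hlayer : ∀ i j : Fin k, i < j → ∀ x ∈ L i, ∀ y ∈ L j, 0 < f x y)
    (p : G → ℝ) (hopt : IsOptimalOn f Set.univ p) :
    supp p ⊆ L ⟨0, hk⟩ := by
  classical
  have hbeats : ∀ x ∈ (L ⟨0, hk⟩).toFinset, ∀ y ∉ (L ⟨0, hk⟩).toFinset, 0 < f x y := by
    intro x hx y hy
    rw [Set.mem_toFinset] at hx hy
    obtain ⟨j, hyj⟩ := Set.iUnion_eq_univ_iff.mp hcover y
    have hj : j ≠ ⟨0, hk⟩ := by
      rintro rfl
      exact hy hyj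
    have h0j : (⟨0, hk⟩ : Fin k) < j := Fin.lt_def.mpr (Nat.pos_of_ne_zero fun h => hj (Fin.ext h))
    exact hlayer _ j h0j x hx y hyj
  simpa using supp_subset_of_forall_beats hf hopt (Set.toFinset_nonempty.mpr (hne _)) hbeats

/-- In a k-layered game, the support of any optimal mixed strategy for
the full game is contained in the first (strongest) layer. -/
theorem optimal_support_in_first_layer
    {G : Type*} [Fintype G] [Nonempty G]
    (f : G → G → ℝ) (hf : ∀ x y, f x y = - f y x)
    (k : ℕ) (hk : 0 < k) (L : Fin k → Set G)
    (hne : ∀ i, (L i).Nonempty)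
    (hdisj : ∀ i j, i ≠ j → Disjoint (L i) (L j))
    (hcover : ⋃ i, L i = Set.univ)
    (hlayer : ∀ i j : Fin k, i < j → ∀ x ∈ L i, ∀ y ∈ L j, 0 < f x y)
    (p : G → ℝ) (hopt : IsOptimalOn f Set.univ p) :
    supp p ⊆ L ⟨0, hk⟩ :=
  optimal_support_in_first_layer_general f hf k hk L hne hcover hlayer p hopt
end

section
/- Let Π be a finite nonempty set, W : Π × Π → ℝ and S : Π → ℝ, and let f be the associated Game-of-Skill payoff f(x,y) := (W(x,y) − W(y,x))/2 + S(x) − S(y). Suppose α > 0 and |W(x,y)| < α/2 for all x, y ∈ Π. Then for any optimal mixed strategy p of the game (Π, f), the transitive strengths within the support of p differ by at most α: for all a, b ∈ supp(p), |S(a) − S(b)| ≤ α. -/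
section

variable {G : Type*} [Fintype G]

theorem sum_mul_payMP_self_eq_zero {f : G → G → ℝ} (hf : ∀ x y, f y x = -f x y) (p : G → ℝ) :
    ∑ y, p y * payMP f p y = 0 := by
  have hneg : ∑ y, p y * payMP f p y = -∑ y, p y * payMP f p y := by
    simp only [payMP, Finset.mul_sum, ← Finset.sum_neg_distrib]
    rw [Finset.sum_comm]
    refine Finset.sum_congr rfl fun x _ => Finset.sum_congr rfl fun y _ => ?_
    rw [hf]
    ring
  linarith

theorem payMP_eq_zero_of_mem_supp {f : G → G → ℝ} (hf : ∀ x y, f y x = -f x y) {p : G → ℝ}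
    (hp : IsOptimalOn f Set.univ p) {a : G} (ha : a ∈ supp p) : payMP f p a = 0 := by
  obtain ⟨⟨hp0, -, -⟩, hpay⟩ := hp
  have hterm : ∀ y ∈ Finset.univ, 0 ≤ p y * payMP f p y :=
    fun y _ => mul_nonneg (hp0 y) (hpay y trivial)
  have h := (Finset.sum_eq_zero_iff_of_nonneg hterm).mp (sum_mul_payMP_self_eq_zero hf p) a
    (Finset.mem_univ a)
  exact (mul_eq_zero.mp h).resolve_left (ne_of_gt ha)

theorem payMP_of_eq_add_sub {f g : G → G → ℝ} {S : G → ℝ} (hf : ∀ x y, f x y = g x y + S x - S y)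
    {p : G → ℝ} (hp1 : ∑ x, p x = 1) (y : G) :
    payMP f p y = payMP g p y + ∑ x, p x * S x - S y := by
  have hS : ∑ x, p x * S y = S y := by rw [← Finset.sum_mul, hp1, one_mul]
  simp only [payMP, hf, mul_sub, mul_add, Finset.sum_sub_distrib, Finset.sum_add_distrib, hS]

theorem abs_payMP_le {g : G → G → ℝ} {p : G → ℝ} (hp0 : ∀ x, 0 ≤ p x) (hp1 : ∑ x, p x = 1)
    {y : G} {c : ℝ} (hg : ∀ x, |g x y| ≤ c) : |payMP g p y| ≤ c :=
  calc |payMP g p y| ≤ ∑ x, |p x * g x y| := Finset.abs_sum_le_sum_abs _ _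
    _ ≤ ∑ x, p x * c := Finset.sum_le_sum fun x _ => by
        rw [abs_mul, abs_of_nonneg (hp0 x)]
        exact mul_le_mul_of_nonneg_left (hg x) (hp0 x)
    _ = c := by rw [← Finset.sum_mul, hp1, one_mul]

end

theorem skill_spread_in_nash_support_general
    {G : Type*} [Fintype G]
    (W : G → G → ℝ) (S : G → ℝ) (f : G → G → ℝ)
    (hfdef : ∀ x y, f x y = (W x y - W y x) / 2 + S x - S y)
    (α : ℝ) (hW : ∀ x y, |W x y| < α / 2)
    (p : G → ℝ) (hopt : IsOptimalOn f Set.univ p) :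
    ∀ a b : G, a ∈ supp p → b ∈ supp p → |S a - S b| ≤ α := by
  intro a b ha hb
  obtain ⟨hp0, -, hp1⟩ := hopt.1
  have hanti : ∀ x y, f y x = -f x y := fun x y => by rw [hfdef, hfdef]; ring
  have hg : ∀ x y, |(W x y - W y x) / 2| ≤ α / 2 := fun x y => by
    have := abs_lt.mp (hW x y)
    have := abs_lt.mp (hW y x)
    exact abs_le.mpr ⟨by linarith, by linarith⟩
  have hga := abs_le.mp (abs_payMP_le (g := fun x y => (W x y - W y x) / 2) hp0 hp1 (hg · a))
  have hgb := abs_le.mp (abs_payMP_le (g := fun x y => (W x y - W y x) / 2) hp0 hp1 (hg · b))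
  have hfa := payMP_eq_zero_of_mem_supp hanti hopt ha
  have hfb := payMP_eq_zero_of_mem_supp hanti hopt hb
  rw [payMP_of_eq_add_sub hfdef hp1] at hfa hfb
  exact abs_le.mpr ⟨by linarith, by linarith⟩

/-- In a Game of Skill f(x,y) = (W(x,y)-W(y,x))/2 + S(x) - S(y) with
|W| < α/2, transitive strengths within the support of any optimal mixed strategy
differ by at most α. -/
theorem skill_spread_in_nash_support
    {G : Type*} [Fintype G] [Nonempty G]
    (W : G → G → ℝ) (S : G → ℝ) (f : G → G → ℝ)
    (hfdef : ∀ x y, f x y = (W x y - W y x) / 2 + S x - S y)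
    (α : ℝ) (hα : 0 < α) (hW : ∀ x y, |W x y| < α / 2)
    (p : G → ℝ) (hopt : IsOptimalOn f Set.univ p) :
    ∀ a b : G, a ∈ supp p → b ∈ supp p → |S a - S b| ≤ α :=
  skill_spread_in_nash_support_general W S f hfdef α hW p hopt
end

section
/- Let B be a finite nonempty set, g0 : ℕ → ℝ and g1 : B → ℝ. Then the maximum over nonempty subsets A ⊆ B of g0(|A|) + min_{a∈A} g1(a) is attained by a 'top set': there exists a nonempty A* ⊆ B attaining this maximum such that g1(a) ≥ g1(b) for every a ∈ A* and every b ∈ B \ A*. -/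
/-!
Fix an optimal nonempty `A₀ ⊆ B`. Among the subsets of `B` of cardinality `|A₀|` there is one,
`A`, whose elements dominate everything outside it. Any subset `A'` of the same size either
equals `A` or contains some `x ∉ A`, and then `min_{A'} g1 ≤ g1 x ≤ min_A g1`. Hence `A` is at
least as good as `A₀`, so it is optimal as well.
-/

open Finset

section TopSet

variable {β α : Type*} [LinearOrder α]

theorem exists_max_over_nonempty_subsets {B : Finset β} (hB : B.Nonempty)
    (F : (A : Finset β) → A.Nonempty → α) :
    ∃ A ⊆ B, ∃ hA : A.Nonempty, ∀ A' ⊆ B, ∀ hA' : A'.Nonempty, F A' hA' ≤ F A hA := by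
  let S := B.powerset.filter Finset.Nonempty
  have hS : S.Nonempty := ⟨B, mem_filter.2 ⟨mem_powerset_self B, hB⟩⟩
  obtain ⟨A, hAS, hmax⟩ :=
    exists_max_image S (fun A => if h : A.Nonempty then F A h else F B hB) hS
  obtain ⟨hAB, hA⟩ := mem_filter.1 hAS
  refine ⟨A, mem_powerset.1 hAB, hA, fun A' hA'B hA' => ?_⟩
  simpa only [dif_pos hA, dif_pos hA'] using
    hmax A' (mem_filter.2 ⟨mem_powerset.2 hA'B, hA'⟩)

variable [DecidableEq β]

def IsTopSet (g : β → α) (B A : Finset β) : Prop :=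
  ∀ a ∈ A, ∀ b ∈ B \ A, g b ≤ g a

theorem IsTopSet.insert_of_isMaxOn {g : β → α} {B A : Finset β} {m : β}
    (hA : IsTopSet g B A) (hm : IsMaxOn g (B \ A : Finset β) m) : IsTopSet g B (insert m A) := by
  intro a ha b hb
  have hbA : b ∈ B \ A := by
    simp only [mem_sdiff, mem_insert, not_or] at hb ⊢
    exact ⟨hb.1, hb.2.2⟩
  rcases mem_insert.1 ha with rfl | ha
  · exact hm hbA
  · exact hA a ha b hbA

theorem exists_isTopSet_card_eq (g : β → α) {B : Finset β} {k : ℕ} (hk : k ≤ B.card) :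
    ∃ A ⊆ B, A.card = k ∧ IsTopSet g B A := by
  induction k with
  | zero => exact ⟨∅, empty_subset B, card_empty, by simp [IsTopSet]⟩
  | succ k ih =>
    obtain ⟨A, hAB, hAk, hA⟩ := ih (by omega)
    have hrest : (B \ A).Nonempty := by
      rw [← card_pos, card_sdiff_of_subset hAB]
      omega
    obtain ⟨m, hm, hmax⟩ := exists_max_image (B \ A) g hrest
    have hmA : m ∉ A := (mem_sdiff.1 hm).2
    refine ⟨insert m A, insert_subset (mem_sdiff.1 hm).1 hAB, ?_,
      hA.insert_of_isMaxOn fun b hb => hmax b hb⟩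
    rw [card_insert_of_notMem hmA, hAk]

theorem IsTopSet.inf'_le_inf' {g : β → α} {B A A' : Finset β}
    (hA : IsTopSet g B A) (hA'B : A' ⊆ B) (hcard : A.card ≤ A'.card)
    (hA' : A'.Nonempty) (hAne : A.Nonempty) :
    A'.inf' hA' g ≤ A.inf' hAne g := by
  by_cases hsub : A' ⊆ A
  · obtain rfl := eq_of_subset_of_card_le hsub hcard
    exact le_rfl
  · obtain ⟨x, hxA', hxA⟩ := not_subset.1 hsub
    exact (inf'_le g hxA').trans
      (le_inf' hAne g fun a ha => hA a ha x (mem_sdiff.2 ⟨hA'B hxA', hxA⟩))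

end TopSet

/-- The maximum over nonempty subsets A ⊆ B of g0(|A|) + min_{a∈A} g1(a)
is attained by a "top set": a set whose elements all have g1-value at least that of
every element outside it. -/
theorem max_attained_by_top_set
    {β : Type*} [DecidableEq β] (B : Finset β) (hB : B.Nonempty)
    (g0 : ℕ → ℝ) (g1 : β → ℝ) :
    ∃ (A : Finset β) (hA : A.Nonempty), A ⊆ B ∧
      (∀ A' : Finset β, A' ⊆ B → ∀ hA' : A'.Nonempty,
        g0 A'.card + A'.inf' hA' g1 ≤ g0 A.card + A.inf' hA g1) ∧
      (∀ a ∈ A, ∀ b ∈ B \ A, g1 b ≤ g1 a) := by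
  obtain ⟨A₀, hA₀B, hA₀, hA₀max⟩ :=
    exists_max_over_nonempty_subsets hB fun A hA => g0 A.card + A.inf' hA g1
  obtain ⟨A, hAB, hcard, htop⟩ := exists_isTopSet_card_eq g1 (card_le_card hA₀B)
  have hA : A.Nonempty := card_pos.1 (hcard ▸ card_pos.2 hA₀)
  refine ⟨A, hA, hAB, fun A' hA'B hA' => ?_, htop⟩
  calc g0 A'.card + A'.inf' hA' g1 ≤ g0 A₀.card + A₀.inf' hA₀ g1 := hA₀max A' hA'B hA'
    _ ≤ g0 A.card + A.inf' hA g1 := by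
      rw [hcard]
      exact add_le_add le_rfl (htop.inf'_le_inf' hA₀B hcard.le hA₀ hA)
end
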